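/- arXiv:2008.01871 — 10 statements merged into one kernel-verified Lean document; each statement's English description precedes it below -/
import Mathlib

section
/- Let M be a commutative nonassociative algebra over a field F of characteristic not 2, and let a ∈ M be an idempotent whose left-multiplication operator ad_a is semisimple with eigenvalues contained in {1, 0, ξ, η} (ξ, η distinct elements of F \ {0,1}), such that the 1-eigenspace is Fa and the eigenspaces obey the fusion rule F(ξ,η) (in particular the 0-eigenspace multiplies every α-eigenspace into the α-eigenspace for each α ∈ {0,1,ξ,η}). Then the Seress condition holds at a: for all w ∈ M and all z in the 0-eigenspace of a, a(wz) = (aw)z. -/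
/-!
Right multiplication by `z ∈ M_0(a)` maps every eigenspace of `ad_a` into itself (fusion rule
`0 ⋆ α ⊆ {α}`), and an endomorphism preserving an eigenspace of `ad_a` commutes with `ad_a` on it.
Since the eigenspaces span `M`, `ad_a` and right multiplication by `z` commute, which is the
Seress condition `a (w z) = (a w) z`.
-/

/-- The `α`-eigenspace of the left-multiplication operator of `a`. -/
noncomputable def esp {F M : Type*} [Field F] [NonUnitalNonAssocCommRing M]
    [Module F M] [SMulCommClass F M M] [IsScalarTower F M M] (a : M) (α : F) :
    Submodule F M :=
  Module.End.eigenspace (LinearMap.mul F M a) α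

theorem Module.End.eigenspace_le_eqLocus_of_mapsTo {R M : Type*} [CommRing R] [AddCommGroup M]
    [Module R M] {f g : Module.End R M} {μ : R}
    (hg : ∀ x ∈ f.eigenspace μ, g x ∈ f.eigenspace μ) :
    f.eigenspace μ ≤ LinearMap.eqLocus (f * g) (g * f) := by
  intro x hx
  rw [LinearMap.mem_eqLocus, Module.End.mul_apply, Module.End.mul_apply,
    Module.End.mem_eigenspace_iff.mp (hg x hx), Module.End.mem_eigenspace_iff.mp hx, map_smul]

theorem stmt0_general {F M : Type*} [Field F] [NonUnitalNonAssocCommRing M]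
    [Module F M] [SMulCommClass F M M] [IsScalarTower F M M]
    (ξ η : F)
    (a : M)
    (hdecomp : esp a (1 : F) ⊔ esp a (0 : F) ⊔ esp a ξ ⊔ esp a η = ⊤)
    (hfus0 : ∀ α ∈ ({0, 1, ξ, η} : Set F),
      ∀ x ∈ esp a (0 : F), ∀ y ∈ esp a α, x * y ∈ esp a α) :
    ∀ w : M, ∀ z ∈ esp a (0 : F), a * (w * z) = (a * w) * z := by
  intro w z hz
  have preserved : ∀ α ∈ ({0, 1, ξ, η} : Set F), esp a α ≤
      LinearMap.eqLocus (LinearMap.mul F M a * LinearMap.mulRight F z)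
        (LinearMap.mulRight F z * LinearMap.mul F M a) := fun α hα =>
    Module.End.eigenspace_le_eqLocus_of_mapsTo fun x hx => by
      simpa only [esp, LinearMap.mulRight_apply, mul_comm x z] using hfus0 α hα z hz x hx
  have commute_on_top : ⊤ ≤ LinearMap.eqLocus (LinearMap.mul F M a * LinearMap.mulRight F z)
      (LinearMap.mulRight F z * LinearMap.mul F M a) := by
    rw [← hdecomp]
    refine sup_le (sup_le (sup_le ?_ ?_) ?_) ?_ <;> apply preserved <;> simp
  exact commute_on_top Submodule.mem_top

/-- the Seress condition holds at an axis of Majorana type. -/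
theorem stmt0 {F M : Type*} [Field F] [NonUnitalNonAssocCommRing M]
    [Module F M] [SMulCommClass F M M] [IsScalarTower F M M]
    (hchar : (2 : F) ≠ 0) (ξ η : F)
    (hξ0 : ξ ≠ 0) (hξ1 : ξ ≠ 1) (hη0 : η ≠ 0) (hη1 : η ≠ 1) (hξη : ξ ≠ η)
    (a : M) (hidem : a * a = a)
    (hprim : esp a (1 : F) = Submodule.span F {a})
    (hdecomp : esp a (1 : F) ⊔ esp a (0 : F) ⊔ esp a ξ ⊔ esp a η = ⊤)
    (hfus0 : ∀ α ∈ ({0, 1, ξ, η} : Set F),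
      ∀ x ∈ esp a (0 : F), ∀ y ∈ esp a α, x * y ∈ esp a α)
    (hfus1ξ : ∀ x ∈ esp a (1 : F), ∀ y ∈ esp a ξ, x * y ∈ esp a ξ)
    (hfus1η : ∀ x ∈ esp a (1 : F), ∀ y ∈ esp a η, x * y ∈ esp a η)
    (hfusξξ : ∀ x ∈ esp a ξ, ∀ y ∈ esp a ξ, x * y ∈ esp a (0 : F) ⊔ esp a (1 : F))
    (hfusξη : ∀ x ∈ esp a ξ, ∀ y ∈ esp a η, x * y ∈ esp a η)
    (hfusηη : ∀ x ∈ esp a η, ∀ y ∈ esp a η,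
      x * y ∈ esp a (0 : F) ⊔ esp a (1 : F) ⊔ esp a ξ) :
    ∀ w : M, ∀ z ∈ esp a (0 : F), a * (w * z) = (a * w) * z :=
  stmt0_general ξ η a hdecomp hfus0
end

section
/- Let M be a commutative nonassociative algebra over a field of characteristic not 2, and let a be an axis of Majorana type (ξ,η), i.e. M decomposes as M_1(a)⊕M_0(a)⊕M_ξ(a)⊕M_η(a) with M_1(a) = Fa and the fusion rule F(ξ,η) holds. Then the linear map τ_a : M → M which is the identity on M_1(a)⊕M_0(a)⊕M_ξ(a) and multiplication by −1 on M_η(a) is an algebra automorphism of M (the Miyamoto involution). -/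
/-- An axis of Majorana type `(ξ,η)`: a primitive idempotent with semisimple
adjoint action, eigenvalues among `{1,0,ξ,η}`, obeying the fusion rule `F(ξ,η)`. -/
structure IsMajoranaAxis {F M : Type*} [Field F] [NonUnitalNonAssocCommRing M]
    [Module F M] [SMulCommClass F M M] [IsScalarTower F M M] (ξ η : F) (a : M) :
    Prop where
  idem : a * a = a
  prim : esp a (1 : F) = Submodule.span F {a}
  decomp : esp a (1 : F) ⊔ esp a (0 : F) ⊔ esp a ξ ⊔ esp a η = ⊤
  fus00 : ∀ x ∈ esp a (0 : F), ∀ y ∈ esp a (0 : F), x * y ∈ esp a (0 : F)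
  fus10 : ∀ x ∈ esp a (1 : F), ∀ y ∈ esp a (0 : F), x * y ∈ esp a (0 : F)
  fus0ξ : ∀ x ∈ esp a (0 : F), ∀ y ∈ esp a ξ, x * y ∈ esp a ξ
  fus0η : ∀ x ∈ esp a (0 : F), ∀ y ∈ esp a η, x * y ∈ esp a η
  fus1ξ : ∀ x ∈ esp a (1 : F), ∀ y ∈ esp a ξ, x * y ∈ esp a ξ
  fus1η : ∀ x ∈ esp a (1 : F), ∀ y ∈ esp a η, x * y ∈ esp a η
  fusξξ : ∀ x ∈ esp a ξ, ∀ y ∈ esp a ξ, x * y ∈ esp a (0 : F) ⊔ esp a (1 : F)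
  fusξη : ∀ x ∈ esp a ξ, ∀ y ∈ esp a η, x * y ∈ esp a η
  fusηη : ∀ x ∈ esp a η, ∀ y ∈ esp a η,
    x * y ∈ esp a (0 : F) ⊔ esp a (1 : F) ⊔ esp a ξ

/-- Bilinear sup-splitting on the left. -/
lemma mul_sup_left {F M : Type*} [Field F] [NonUnitalNonAssocCommRing M]
    [Module F M] [SMulCommClass F M M] [IsScalarTower F M M]
    {p q r t : Submodule F M}
    (hp : ∀ x ∈ p, ∀ y ∈ r, x * y ∈ t) (hq : ∀ x ∈ q, ∀ y ∈ r, x * y ∈ t) :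
    ∀ x ∈ p ⊔ q, ∀ y ∈ r, x * y ∈ t := by
  intro x hx y hy
  obtain ⟨u, hu, v, hv, rfl⟩ := Submodule.mem_sup.mp hx
  rw [add_mul]
  exact t.add_mem (hp u hu y hy) (hq v hv y hy)

/-- Bilinear sup-splitting on the right. -/
lemma mul_sup_right {F M : Type*} [Field F] [NonUnitalNonAssocCommRing M]
    [Module F M] [SMulCommClass F M M] [IsScalarTower F M M]
    {p q r t : Submodule F M}
    (hp : ∀ x ∈ r, ∀ y ∈ p, x * y ∈ t) (hq : ∀ x ∈ r, ∀ y ∈ q, x * y ∈ t) :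
    ∀ x ∈ r, ∀ y ∈ p ⊔ q, x * y ∈ t := by
  intro x hx y hy
  obtain ⟨u, hu, v, hv, rfl⟩ := Submodule.mem_sup.mp hy
  rw [mul_add]
  exact t.add_mem (hp x hx u hu) (hq x hx v hv)

/-- the Miyamoto involution of an axis of Majorana type `(ξ,η)` is
an algebra automorphism. -/
theorem stmt1 {F M : Type*} [Field F] [NonUnitalNonAssocCommRing M]
    [Module F M] [SMulCommClass F M M] [IsScalarTower F M M]
    (hchar : (2 : F) ≠ 0) (ξ η : F)
    (hξ0 : ξ ≠ 0) (hξ1 : ξ ≠ 1) (hη0 : η ≠ 0) (hη1 : η ≠ 1) (hξη : ξ ≠ η)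
    (a : M) (h : IsMajoranaAxis ξ η a)
    (τ : M →ₗ[F] M)
    (hτeven : ∀ x ∈ esp a (1 : F) ⊔ esp a (0 : F) ⊔ esp a ξ, τ x = x)
    (hτodd : ∀ x ∈ esp a η, τ x = -x) :
    (∀ x y : M, τ (x * y) = τ x * τ y) ∧ Function.Bijective τ := by
  set E : Submodule F M := esp a (1 : F) ⊔ esp a (0 : F) ⊔ esp a ξ with hE
  set O : Submodule F M := esp a η with hO
  have h1E : esp a (1 : F) ≤ E := le_sup_of_le_left le_sup_left
  have h0E : esp a (0 : F) ≤ E := le_sup_of_le_left le_sup_right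
  have hξE : esp a ξ ≤ E := le_sup_right
  -- products of `esp 1` with `esp 1`
  have fus11 : ∀ x ∈ esp a (1 : F), ∀ y ∈ esp a (1 : F), x * y ∈ esp a (1 : F) := by
    intro x hx y hy
    rw [h.prim] at hx hy ⊢
    obtain ⟨c, rfl⟩ := Submodule.mem_span_singleton.mp hx
    obtain ⟨d, rfl⟩ := Submodule.mem_span_singleton.mp hy
    rw [smul_mul_assoc, mul_smul_comm, h.idem]
    exact Submodule.smul_mem _ _ (Submodule.smul_mem _ _ (Submodule.mem_span_singleton_self a))
  -- multiplication tables
  have mulEE : ∀ x ∈ E, ∀ y ∈ E, x * y ∈ E := by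
    apply mul_sup_left <;> [apply mul_sup_left; skip] <;>
      [apply mul_sup_right; apply mul_sup_right; apply mul_sup_right] <;>
      [apply mul_sup_right; skip; apply mul_sup_right; skip; apply mul_sup_right; skip]
    · exact fun x hx y hy => h1E (fus11 x hx y hy)
    · exact fun x hx y hy => h0E (h.fus10 x hx y hy)
    · exact fun x hx y hy => hξE (h.fus1ξ x hx y hy)
    · exact fun x hx y hy => h0E (by rw [mul_comm]; exact h.fus10 y hy x hx)
    · exact fun x hx y hy => h0E (h.fus00 x hx y hy)
    · exact fun x hx y hy => hξE (h.fus0ξ x hx y hy)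
    · exact fun x hx y hy => hξE (by rw [mul_comm]; exact h.fus1ξ y hy x hx)
    · exact fun x hx y hy => hξE (by rw [mul_comm]; exact h.fus0ξ y hy x hx)
    · intro x hx y hy
      have := h.fusξξ x hx y hy
      have hle : esp a (0:F) ⊔ esp a (1:F) ≤ E :=
        sup_le (le_sup_of_le_left le_sup_right) (le_sup_of_le_left le_sup_left)
      exact hle this
  have mulOO : ∀ x ∈ O, ∀ y ∈ O, x * y ∈ E := by
    intro x hx y hy
    have := h.fusηη x hx y hy
    have hle : esp a (0:F) ⊔ esp a (1:F) ⊔ esp a ξ ≤ E :=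
      sup_le (sup_le (le_sup_of_le_left le_sup_right) (le_sup_of_le_left le_sup_left)) le_sup_right
    exact hle this
  have mulEO : ∀ x ∈ E, ∀ y ∈ O, x * y ∈ O := by
    apply mul_sup_left
    · apply mul_sup_left
      · exact h.fus1η
      · exact h.fus0η
    · exact h.fusξη
  have mulOE : ∀ x ∈ O, ∀ y ∈ E, x * y ∈ O := fun x hx y hy => by
    rw [mul_comm]; exact mulEO y hy x hx
  -- decomposition of any element
  have hdec : ∀ x : M, ∃ e ∈ E, ∃ o ∈ O, x = e + o := by
    intro x
    have hx : x ∈ E ⊔ O := by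
      rw [hE, hO]
      rw [show esp a (1:F) ⊔ esp a (0:F) ⊔ esp a ξ ⊔ esp a η = ⊤ from h.decomp]
      exact Submodule.mem_top
    obtain ⟨e, he, o, ho, hx⟩ := Submodule.mem_sup.mp hx
    exact ⟨e, he, o, ho, hx.symm⟩
  have hτ : ∀ e ∈ E, ∀ o ∈ O, τ (e + o) = e - o := by
    intro e he o ho
    rw [map_add, hτeven e he, hτodd o ho, sub_eq_add_neg]
  constructor
  · intro x y
    obtain ⟨e, he, o, ho, rfl⟩ := hdec x
    obtain ⟨e', he', o', ho', rfl⟩ := hdec y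
    have hprod : (e + o) * (e' + o') = (e * e' + o * o') + (e * o' + o * e') := by
      rw [add_mul, mul_add, mul_add]; abel
    have hEpart : e * e' + o * o' ∈ E :=
      E.add_mem (mulEE e he e' he') (mulOO o ho o' ho')
    have hOpart : e * o' + o * e' ∈ O :=
      O.add_mem (mulEO e he o' ho') (mulOE o ho e' he')
    rw [hprod, hτ _ hEpart _ hOpart, hτ e he o ho, hτ e' he' o' ho']
    rw [sub_mul, mul_sub, mul_sub]
    abel
  · have hinv : Function.Involutive τ := by
      intro x
      obtain ⟨e, he, o, ho, rfl⟩ := hdec x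
      rw [hτ e he o ho, sub_eq_add_neg, map_add, hτeven e he, map_neg, hτodd o ho, neg_neg]
    exact hinv.bijective
end

section
/- Let M be a 2-generated axial algebra of Majorana type (ξ,η) admitting a flip, with axes a_i (i ∈ ℤ), and set p_{i,j} = a_j a_{i+j} − η(a_i + a_{i+j}). Let q ∈ M and π ∈ F. If a_i lies in the π-eigenspace of (multiplication by) q for every i ∈ ℤ, then p_{i,j} lies in the π-eigenspace of q for all i, j ∈ ℤ. -/
lemma mem_esp_iff {F M : Type*} [Field F] [NonUnitalNonAssocCommRing M]
    [Module F M] [SMulCommClass F M M] [IsScalarTower F M M]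
    {a x : M} {α : F} : x ∈ esp a α ↔ a * x = α • x := by
  rw [esp, Module.End.mem_eigenspace_iff]
  rfl

lemma seress {F M : Type*} [Field F] [NonUnitalNonAssocCommRing M]
    [Module F M] [SMulCommClass F M M] [IsScalarTower F M M] {ξ η : F} {a : M}
    (h : IsMajoranaAxis ξ η a) {z : M} (hz : z ∈ esp a (0 : F)) (w : M) :
    a * (w * z) = (a * w) * z := by
  have haz : a * z = 0 := by rw [mem_esp_iff.mp hz, zero_smul]
  have hw : w ∈ esp a (1 : F) ⊔ esp a (0 : F) ⊔ esp a ξ ⊔ esp a η := by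
    rw [h.decomp]; trivial
  obtain ⟨u, hu, wη, hη, rfl⟩ := Submodule.mem_sup.mp hw
  obtain ⟨v, hv, wξ, hξ', rfl⟩ := Submodule.mem_sup.mp hu
  obtain ⟨w1, h1, w0, h0, rfl⟩ := Submodule.mem_sup.mp hv
  obtain ⟨c, rfl⟩ : ∃ c : F, w1 = c • a := by
    rcases Submodule.mem_span_singleton.mp (h.prim ▸ h1) with ⟨c, hc⟩
    exact ⟨c, hc.symm⟩
  have e1 : (c • a) * z = 0 := by rw [smul_mul_assoc, haz, smul_zero]
  have e0 : a * (w0 * z) = 0 := by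
    rw [mem_esp_iff.mp (h.fus00 w0 h0 z hz), zero_smul]
  have eξ : a * (wξ * z) = ξ • (wξ * z) := by
    have := h.fus0ξ z hz wξ hξ'
    rw [mul_comm wξ z]; exact mem_esp_iff.mp this
  have eη : a * (wη * z) = η • (wη * z) := by
    have := h.fus0η z hz wη hη
    rw [mul_comm wη z]; exact mem_esp_iff.mp this
  have ma1 : a * (c • a) = c • a := by rw [mul_smul_comm, h.idem]
  have ma0 : a * w0 = 0 := by rw [mem_esp_iff.mp h0, zero_smul]
  have maξ : a * wξ = ξ • wξ := mem_esp_iff.mp hξ'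
  have maη : a * wη = η • wη := mem_esp_iff.mp hη
  rw [add_mul, add_mul, add_mul, mul_add, mul_add, mul_add, e1, e0, eξ, eη,
    mul_add, mul_add, mul_add, ma1, ma0, maξ, maη, add_mul, add_mul, add_mul,
    e1, zero_mul, smul_mul_assoc, smul_mul_assoc]
  rw [mul_zero, zero_add]

/-- if every axis `a i` lies in the `π`-eigenspace of `q`, then so
does every `p_{i,j} = a_j a_{i+j} - η(a_i + a_{i+j})`. -/
theorem stmt6 {F M : Type*} [Field F] [NonUnitalNonAssocCommRing M]
    [Module F M] [SMulCommClass F M M] [IsScalarTower F M M]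
    (hchar : (2 : F) ≠ 0) (ξ η : F)
    (hξ0 : ξ ≠ 0) (hξ1 : ξ ≠ 1) (hη0 : η ≠ 0) (hη1 : η ≠ 1) (hξη : ξ ≠ η)
    (a : ℤ → M) (haxes : ∀ i : ℤ, IsMajoranaAxis ξ η (a i))
    (hgen : NonUnitalAlgebra.adjoin F ({a 0, a 1} : Set M) = ⊤)
    (θ τ₀ : M ≃ₗ[F] M)
    (hθm : ∀ x y : M, θ (x * y) = θ x * θ y)
    (hτm : ∀ x y : M, τ₀ (x * y) = τ₀ x * τ₀ y)
    (hθa : ∀ i : ℤ, θ (a i) = a (1 - i))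
    (hτa : ∀ i : ℤ, τ₀ (a i) = a (-i))
    (hτeven : ∀ x ∈ esp (a 0) (1 : F) ⊔ esp (a 0) (0 : F) ⊔ esp (a 0) ξ, τ₀ x = x)
    (hτodd : ∀ x ∈ esp (a 0) η, τ₀ x = -x)
    (q : M) (π : F)
    (hq : ∀ i : ℤ, a i ∈ esp q π) :
    ∀ i j : ℤ, (a j * a (i + j) - η • (a i + a (i + j))) ∈ esp q π := by
  intro i j
  have hb := mem_esp_iff.mp (hq j)
  have hc := mem_esp_iff.mp (hq (i + j))
  set b := a j
  set c := a (i + j)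
  set z := q - π • b with hzdef
  have hz : z ∈ esp b (0 : F) := by
    rw [mem_esp_iff, zero_smul, hzdef, mul_sub, mul_comm b q, hb,
      mul_smul_comm, (haxes j).idem, sub_self]
  have key := seress (haxes j) hz c
  have hcz : c * z = π • c - π • (c * b) := by
    rw [hzdef, mul_sub, mul_comm c q, hc, mul_smul_comm]
  have hbc : q * (b * c) = π • (b * c) := by
    have lhs : b * (c * z) = π • (b * c) - π • (b * (c * b)) := by
      rw [hcz, mul_sub, mul_smul_comm, mul_smul_comm]
    have rhs : (b * c) * z = q * (b * c) - π • (b * (c * b)) := by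
      rw [hzdef, mul_sub, mul_comm (b * c) q, mul_smul_comm, mul_comm (b * c) b,
        mul_comm c b]
    rw [lhs, rhs] at key
    have := sub_left_injective.eq_iff.mp key
    linear_combination (norm := module) -this
  exact Submodule.sub_mem _ (mem_esp_iff.mpr hbc)
    (Submodule.smul_mem _ _ (Submodule.add_mem _ (hq i) (hq (i + j))))
end

section
/- Let M be a 2-generated axial algebra of Majorana type (ξ,η) over a field of characteristic not 2, with generating axes a_0, a_1 and flip θ, and suppose the axial dimension D equals 2 and M satisfies an odd relation (a_1 = a_{−1}). Then the η-eigenspace M_η(a_0) is zero; in particular M is an axial algebra of Jordan type. -/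
/-- axial dimension 2 with an odd relation (`a₁ = a₋₁`) forces the
`η`-eigenspace of `a₀` to vanish (so `M` is of Jordan type). -/
theorem stmt7 {F M : Type*} [Field F] [NonUnitalNonAssocCommRing M]
    [Module F M] [SMulCommClass F M M] [IsScalarTower F M M]
    (hchar : (2 : F) ≠ 0) (ξ η : F)
    (hξ0 : ξ ≠ 0) (hξ1 : ξ ≠ 1) (hη0 : η ≠ 0) (hη1 : η ≠ 1) (hξη : ξ ≠ η)
    (a : ℤ → M) (haxes : ∀ i : ℤ, IsMajoranaAxis ξ η (a i))
    (hgen : NonUnitalAlgebra.adjoin F ({a 0, a 1} : Set M) = ⊤)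
    (θ τ₀ : M ≃ₗ[F] M)
    (hθm : ∀ x y : M, θ (x * y) = θ x * θ y)
    (hτm : ∀ x y : M, τ₀ (x * y) = τ₀ x * τ₀ y)
    (hθa : ∀ i : ℤ, θ (a i) = a (1 - i))
    (hτa : ∀ i : ℤ, τ₀ (a i) = a (-i))
    (hτeven : ∀ x ∈ esp (a 0) (1 : F) ⊔ esp (a 0) (0 : F) ⊔ esp (a 0) ξ, τ₀ x = x)
    (hτodd : ∀ x ∈ esp (a 0) η, τ₀ x = -x)
    (hD : Module.rank F ↥(Submodule.span F (Set.range a)) = 2)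
    (hrel : a 1 = a (-1)) :
    esp (a 0) η = ⊥ := by
  have hfix : ∀ x : M, τ₀ x = x := by
    let S : NonUnitalSubalgebra F M :=
      { carrier := {x | τ₀ x = x}
        add_mem' := by intro x y hx hy; simp only [Set.mem_setOf_eq] at *
                       rw [map_add, hx, hy]
        zero_mem' := by simp
        mul_mem' := by intro x y hx hy; simp only [Set.mem_setOf_eq] at *
                       rw [hτm, hx, hy]
        smul_mem' := by intro c x hx; simp only [Set.mem_setOf_eq] at *
                        rw [map_smul, hx] }
    have hsub : ({a 0, a 1} : Set M) ⊆ S := by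
      rintro x (rfl | rfl)
      · show τ₀ (a 0) = a 0
        rw [hτa]; norm_num
      · show τ₀ (a 1) = a 1
        rw [hτa, ← hrel]
    intro x
    have hx : x ∈ NonUnitalAlgebra.adjoin F ({a 0, a 1} : Set M) := by
      rw [hgen]; trivial
    exact NonUnitalAlgebra.adjoin_le hsub hx
  ext x
  simp only [Submodule.mem_bot]
  constructor
  · intro hx
    have h1 := hfix x
    have h2 := hτodd x hx
    rw [h1] at h2
    have h3 : (2 : F) • x = 0 := by
      rw [two_smul]
      nth_rewrite 1 [h2]
      exact neg_add_cancel x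
    rcases smul_eq_zero.mp h3 with h | h
    · exact absurd h hchar
    · exact h
  · rintro rfl
    exact (esp (a 0) η).zero_mem
end

section
/- Let M be a 2-generated axial algebra of Majorana type (ξ,η) over a field of characteristic not 2, admitting a flip, with axial dimension D = 2 satisfying an even relation: a_1 + a_{−1} + α a_0 = 0 for some α ∈ F. Then p_1 = a_0a_1 − η(a_0 + a_1) = 0, α(1−η) + 2η = 0, and dim M < 3. -/
/-!
The element `p₁ = a₀a₁ - η(a₀ + a₁)` has no `η`-component with respect to `a₀`, so the Miyamoto
involution `τ₀` fixes it and maps it to `a₀a₋₁ - η(a₀ + a₋₁)`; the flip `θ` fixes it by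
commutativity. Multiplying the even relation by `a₀` gives `2p₁ + c a₀ = 0` with
`c = α(1 - η) + 2η`, and applying `θ` gives `2p₁ + c a₁ = 0`, so `c (a₀ - a₁) = 0`. The axes
`a₀, a₁` are distinct, since otherwise the shift `θτ₀` would make every axis equal to `a₀`,
against `D = 2`. Hence `c = 0` and `p₁ = 0`; then `span {a₀, a₁}` is closed under multiplication,
so it is all of `M`.
-/

section Axis

variable {F M : Type*} [Field F] [NonUnitalNonAssocCommRing M]
  [Module F M] [SMulCommClass F M M] [IsScalarTower F M M]

theorem mem_esp_iff_s8 {b x : M} {μ : F} : x ∈ esp b μ ↔ b * x = μ • x :=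
  Module.End.mem_eigenspace_iff

theorem mul_mem_esp {b x : M} {μ : F} (hx : x ∈ esp b μ) : b * x ∈ esp b μ := by
  rw [mem_esp_iff_s8.mp hx]
  exact Submodule.smul_mem _ _ hx

theorem esp_le_comap_mul (b : M) (μ : F) :
    esp b μ ≤ (esp b μ).comap (LinearMap.mul F M b) :=
  fun _ hx => mul_mem_esp hx

theorem sup_esp_le_comap_mul (b : M) (ξ : F) :
    esp b (1 : F) ⊔ esp b 0 ⊔ esp b ξ ≤
      (esp b (1 : F) ⊔ esp b 0 ⊔ esp b ξ).comap (LinearMap.mul F M b) := by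
  refine sup_le (sup_le ?_ ?_) ?_ <;>
    refine (esp_le_comap_mul _ _).trans (Submodule.comap_mono ?_)
  exacts [le_sup_left.trans le_sup_left, le_sup_right.trans le_sup_left, le_sup_right]

theorem IsMajoranaAxis.mul_sub_smul_mem {ξ η : F} {b : M} (hb : IsMajoranaAxis ξ η b) (y : M) :
    b * y - η • y ∈ esp b (1 : F) ⊔ esp b 0 ⊔ esp b ξ := by
  have hy : y ∈ esp b (1 : F) ⊔ esp b 0 ⊔ esp b ξ ⊔ esp b η := hb.decomp ▸ Submodule.mem_top
  obtain ⟨v, hv, w, hw, rfl⟩ := Submodule.mem_sup.mp hy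
  have hbw : b * w = η • w := mem_esp_iff_s8.mp hw
  have : b * (v + w) - η • (v + w) = b * v - η • v := by rw [mul_add, hbw]; module
  rw [this]
  exact sub_mem (sup_esp_le_comap_mul b ξ hv) (Submodule.smul_mem _ _ hv)

theorem mul_mem_span_pair_of_idem {η : F} {e f : M} (he : e * e = e) (hf : f * f = f)
    (hef : e * f = η • (e + f)) {x y : M} (hx : x ∈ Submodule.span F {e, f})
    (hy : y ∈ Submodule.span F {e, f}) : x * y ∈ Submodule.span F {e, f} := by
  obtain ⟨r, s, rfl⟩ := Submodule.mem_span_pair.mp hx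
  obtain ⟨r', s', rfl⟩ := Submodule.mem_span_pair.mp hy
  refine Submodule.mem_span_pair.mpr
    ⟨r * r' + η * (r * s' + s * r'), s * s' + η * (r * s' + s * r'), ?_⟩
  simp only [add_mul, mul_add, smul_mul_assoc, mul_smul_comm, smul_smul, he, hf,
    mul_comm f e, hef]
  module

theorem rank_le_two_of_adjoin_pair_eq_top {η : F} {e f : M} (he : e * e = e) (hf : f * f = f)
    (hef : e * f = η • (e + f)) (hgen : NonUnitalAlgebra.adjoin F ({e, f} : Set M) = ⊤) :
    Module.rank F M ≤ 2 := by
  set S := Submodule.span F ({e, f} : Set M)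
  have hS : S = ⊤ := by
    refine eq_top_iff.mpr fun x _ => ?_
    have hle : NonUnitalAlgebra.adjoin F ({e, f} : Set M) ≤
        S.toNonUnitalSubalgebra fun _ _ => mul_mem_span_pair_of_idem he hf hef :=
      NonUnitalAlgebra.adjoin_le Submodule.subset_span
    exact hle (hgen ▸ NonUnitalAlgebra.mem_top)
  calc Module.rank F M = Module.rank F S := by rw [hS, rank_top]
    _ ≤ Cardinal.mk ({e, f} : Set M) := rank_span_le _
    _ ≤ 2 := by exact_mod_cast (Cardinal.mk_insert_le).trans (by simp; norm_num)

end Axis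

theorem eq_apply_zero_of_shift {α : Type*} {a : ℤ → α} {σ : α → α} (hσ : Function.Injective σ)
    (hshift : ∀ i, σ (a i) = a (i + 1)) (h : a 1 = a 0) (i : ℤ) : a i = a 0 := by
  induction i using Int.induction_on with
  | zero => rfl
  | succ i ih => rw [← hshift, ih, hshift, zero_add, h]
  | pred i ih =>
    apply hσ
    rw [hshift, sub_add_cancel, ih, hshift, zero_add, h]

theorem apply_zero_ne_apply_one_of_shift {F M : Type*} [Field F] [AddCommGroup M] [Module F M]
    {a : ℤ → M} {σ : M → M} (hσ : Function.Injective σ) (hshift : ∀ i, σ (a i) = a (i + 1))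
    (hD : 1 < Module.rank F (Submodule.span F (Set.range a))) : a 0 ≠ a 1 := by
  intro h
  have hrange : Set.range a = {a 0} :=
    Set.eq_singleton_iff_unique_mem.mpr
      ⟨⟨0, rfl⟩, by rintro _ ⟨i, rfl⟩; exact eq_apply_zero_of_shift hσ hshift h.symm i⟩
  have := (rank_span_le (R := F) (Set.range a)).trans_lt' hD
  simp [hrange] at this

theorem stmt8_general {F M : Type*} [Field F] [NonUnitalNonAssocCommRing M]
    [Module F M] [SMulCommClass F M M] [IsScalarTower F M M]
    (hchar : (2 : F) ≠ 0) (ξ η : F)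
    (a : ℤ → M) (haxes : ∀ i : ℤ, IsMajoranaAxis ξ η (a i))
    (hgen : NonUnitalAlgebra.adjoin F ({a 0, a 1} : Set M) = ⊤)
    (θ τ₀ : M ≃ₗ[F] M)
    (hθm : ∀ x y : M, θ (x * y) = θ x * θ y)
    (hτm : ∀ x y : M, τ₀ (x * y) = τ₀ x * τ₀ y)
    (hθa : ∀ i : ℤ, θ (a i) = a (1 - i))
    (hτa : ∀ i : ℤ, τ₀ (a i) = a (-i))
    (hτeven : ∀ x ∈ esp (a 0) (1 : F) ⊔ esp (a 0) (0 : F) ⊔ esp (a 0) ξ, τ₀ x = x)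
    (hD : Module.rank F ↥(Submodule.span F (Set.range a)) = 2)
    (α : F) (hrel : a 1 + a (-1) + α • a 0 = 0) :
    a 0 * a 1 - η • (a 0 + a 1) = 0 ∧ α * (1 - η) + 2 * η = 0 ∧
      Module.rank F M < 3 := by
  set p := a 0 * a 1 - η • (a 0 + a 1)
  set c := α * (1 - η) + 2 * η
  have hθ0 : θ (a 0) = a 1 := by simpa using hθa 0
  have hθ1 : θ (a 1) = a 0 := by simpa using hθa 1
  have hp_τ : a 0 * a (-1) - η • (a 0 + a (-1)) = p := by
    have ha0_mem : a 0 ∈ esp (a 0) (1 : F) ⊔ esp (a 0) 0 ⊔ esp (a 0) ξ :=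
      Submodule.mem_sup_left (Submodule.mem_sup_left
        (mem_esp_iff_s8.mpr (by rw [(haxes 0).idem, one_smul])))
    have hp_mem : p ∈ esp (a 0) (1 : F) ⊔ esp (a 0) 0 ⊔ esp (a 0) ξ := by
      convert sub_mem ((haxes 0).mul_sub_smul_mem (a 1)) (Submodule.smul_mem _ η ha0_mem)
        using 1
      module
    simpa [p, hτm, hτa] using hτeven p hp_mem
  have hp_θ : θ p = p := by
    simp only [p, map_sub, map_smul, map_add, hθm, hθ0, hθ1, mul_comm (a 1), add_comm (a 1)]
  have hmul : a 0 * a 1 + a 0 * a (-1) + α • a 0 = 0 := by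
    simpa [mul_add, mul_smul_comm, (haxes 0).idem] using congrArg (a 0 * ·) hrel
  have h2p_a0 : (2 : F) • p + c • a 0 = 0 := by
    linear_combination (norm := module) hmul - hp_τ - η • hrel
  have h2p_a1 : (2 : F) • p + c • a 1 = 0 := by
    simpa [hp_θ, hθ0] using congrArg θ h2p_a0
  have hne : a 0 ≠ a 1 := by
    refine apply_zero_ne_apply_one_of_shift (F := F) (σ := θ ∘ τ₀) (θ.injective.comp τ₀.injective)
      (fun i => ?_) (by rw [hD]; norm_num)
    simp [hτa, hθa, add_comm]
  have hc : c = 0 := by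
    have : c • (a 0 - a 1) = 0 := by linear_combination (norm := module) h2p_a0 - h2p_a1
    simpa [sub_eq_zero, hne] using this
  have hp : p = 0 := by simpa [hc, hchar] using h2p_a0
  refine ⟨hp, hc, ?_⟩
  exact (rank_le_two_of_adjoin_pair_eq_top (haxes 0).idem (haxes 1).idem
    (sub_eq_zero.mp hp) hgen).trans_lt (by norm_num)

/-- axial dimension 2 with an even relation
`a₁ + a₋₁ + α a₀ = 0` forces `p₁ = 0`, `α(1-η) + 2η = 0` and `dim M < 3`. -/
theorem stmt8 {F M : Type*} [Field F] [NonUnitalNonAssocCommRing M]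
    [Module F M] [SMulCommClass F M M] [IsScalarTower F M M]
    (hchar : (2 : F) ≠ 0) (ξ η : F)
    (hξ0 : ξ ≠ 0) (hξ1 : ξ ≠ 1) (hη0 : η ≠ 0) (hη1 : η ≠ 1) (hξη : ξ ≠ η)
    (a : ℤ → M) (haxes : ∀ i : ℤ, IsMajoranaAxis ξ η (a i))
    (hgen : NonUnitalAlgebra.adjoin F ({a 0, a 1} : Set M) = ⊤)
    (θ τ₀ : M ≃ₗ[F] M)
    (hθm : ∀ x y : M, θ (x * y) = θ x * θ y)
    (hτm : ∀ x y : M, τ₀ (x * y) = τ₀ x * τ₀ y)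
    (hθa : ∀ i : ℤ, θ (a i) = a (1 - i))
    (hτa : ∀ i : ℤ, τ₀ (a i) = a (-i))
    (hτeven : ∀ x ∈ esp (a 0) (1 : F) ⊔ esp (a 0) (0 : F) ⊔ esp (a 0) ξ, τ₀ x = x)
    (hτodd : ∀ x ∈ esp (a 0) η, τ₀ x = -x)
    (hD : Module.rank F ↥(Submodule.span F (Set.range a)) = 2)
    (α : F) (hrel : a 1 + a (-1) + α • a 0 = 0) :
    a 0 * a 1 - η • (a 0 + a 1) = 0 ∧ α * (1 - η) + 2 * η = 0 ∧
      Module.rank F M < 3 :=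
  stmt8_general hchar ξ η a haxes hgen θ τ₀ hθm hτm hθa hτa hτeven hD α hrel
end

section
/- Let F be a field of characteristic not 2, and let Z(2,1/2) be the F-vector space with basis {p̂_i : i ∈ ℤ_{>0}} ∪ {â_i : i ∈ ℤ} equipped with the commutative bilinear multiplication: p̂_i p̂_j = (3/4)(p̂_i + p̂_j) − (3/8)(p̂_{i+j} + p̂_{|i−j|}) (with p̂_0 := 0); â_i â_j = p̂_{|i−j|} + (1/2)(â_i + â_j); â_i p̂_j = (3/2)p̂_j − (3/4)â_i + (3/8)(â_{i−j} + â_{i+j}). Then each â_i is an idempotent of Z(2,1/2), and the linear map θ determined by θ(â_i) = â_{1−i} and θ(p̂_j) = p̂_j is an algebra automorphism. -/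
/-!
Idempotency is the case `i = j` of the product rule for the `â_i`, using `p̂_0 = 0`.
For `θ`, the reflection `i ↦ 1 - i` preserves `|i - j|` and exchanges `i - j` with `i + j`
in the form `(1 - i) ∓ j`, so `θ` respects the three families of structure constants; by
bilinearity it is then multiplicative on the whole algebra, and it is bijective because it is
an involution on the basis.
-/

namespace LinearMap

variable {R M N P : Type*} [CommSemiring R] [AddCommMonoid M] [AddCommMonoid N]
  [AddCommMonoid P] [Module R M] [Module R N] [Module R P]

theorem ext_on₂ {s : Set M} {t : Set N} (hs : Submodule.span R s = ⊤)
    (ht : Submodule.span R t = ⊤) {B C : M →ₗ[R] N →ₗ[R] P}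
    (h : ∀ x ∈ s, ∀ y ∈ t, B x y = C x y) : B = C :=
  ext_on hs fun x hx => ext_on ht fun y hy => h x hx y hy

theorem involutive_of_span_eq_top {s : Set M} (hs : Submodule.span R s = ⊤) {f : M →ₗ[R] M}
    (h : ∀ x ∈ s, f (f x) = x) : Function.Involutive f := fun x =>
  congr($(ext_on (f := f.comp f) (g := id) hs fun y hy => h y hy) x)

variable {A B : Type*} [NonUnitalNonAssocSemiring A] [Module R A] [SMulCommClass R A A]
  [IsScalarTower R A A] [NonUnitalNonAssocSemiring B] [Module R B] [SMulCommClass R B B]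
  [IsScalarTower R B B]

theorem map_mul_of_span_eq_top {s : Set A} (hs : Submodule.span R s = ⊤) (f : A →ₗ[R] B)
    (h : ∀ x ∈ s, ∀ y ∈ s, f (x * y) = f x * f y) (x y : A) : f (x * y) = f x * f y :=
  congr($(ext_on₂ (B := (LinearMap.mul R A).compr₂ f) (C := (LinearMap.mul R B).compl₁₂ f f)
    hs hs h) x y)

end LinearMap

section Z2Half

variable {F M : Type*} [Field F] [NonUnitalNonAssocCommRing M] [Module F M]
  {p : ℕ → M} {b : ℤ → M}

theorem mul_self_eq_self_of_mul_eq (hchar : (2 : F) ≠ 0) (hp0 : p 0 = 0)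
    (hbb : ∀ i j : ℤ, b i * b j = p (i - j).natAbs + (1 / 2 : F) • (b i + b j)) (i : ℤ) :
    b i * b i = b i := by
  rw [hbb, sub_self, Int.natAbs_zero, hp0, zero_add, ← two_smul F, smul_smul, one_div,
    inv_mul_cancel₀ hchar, one_smul]

variable {θ : M →ₗ[F] M}

theorem reflection_map_mul_p_p (hθp : ∀ j : ℕ, θ (p j) = p j)
    (hpp : ∀ i j : ℕ, p i * p j =
      (3 / 4 : F) • (p i + p j) - (3 / 8 : F) • (p (i + j) + p ((i : ℤ) - (j : ℤ)).natAbs))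
    (i j : ℕ) : θ (p i * p j) = θ (p i) * θ (p j) := by
  simp only [hpp, map_sub, map_smul, map_add, hθp]

theorem reflection_map_mul_b_b (hθb : ∀ i : ℤ, θ (b i) = b (1 - i))
    (hθp : ∀ j : ℕ, θ (p j) = p j)
    (hbb : ∀ i j : ℤ, b i * b j = p (i - j).natAbs + (1 / 2 : F) • (b i + b j))
    (i j : ℤ) : θ (b i * b j) = θ (b i) * θ (b j) := by
  have hdist : (1 - i - (1 - j)).natAbs = (i - j).natAbs := by omega
  simp only [hbb, map_add, map_smul, hθp, hθb, hdist]

theorem reflection_map_mul_b_p (hθb : ∀ i : ℤ, θ (b i) = b (1 - i))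
    (hθp : ∀ j : ℕ, θ (p j) = p j)
    (hbp : ∀ (i : ℤ) (j : ℕ), b i * p j =
      (3 / 2 : F) • p j - (3 / 4 : F) • b i + (3 / 8 : F) • (b (i - j) + b (i + j)))
    (i : ℤ) (j : ℕ) : θ (b i * p j) = θ (b i) * θ (p j) := by
  have hminus : 1 - (i - j) = 1 - i + j := by ring
  have hplus : 1 - (i + j) = 1 - i - j := by ring
  simp only [hbp, map_add, map_sub, map_smul, hθp, hθb, hminus, hplus, add_comm (b (1 - i + j))]

end Z2Half

/-- in the algebra `Z(2,1/2)` (presented by its basis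
`p̂_i (i > 0)`, `â_i (i ∈ ℤ)` and structure constants, with `p̂_0 = 0`),
every `â_i` is an idempotent, and the linear map `θ` with `θ(â_i) = â_{1-i}`,
`θ(p̂_j) = p̂_j` is an algebra automorphism. -/
theorem stmt9 {F M : Type*} [Field F] [NonUnitalNonAssocCommRing M]
    [Module F M] [SMulCommClass F M M] [IsScalarTower F M M]
    (hchar : (2 : F) ≠ 0)
    (p : ℕ → M) (b : ℤ → M)
    (hp0 : p 0 = 0)
    (hpp : ∀ i j : ℕ, p i * p j =
      (3 / 4 : F) • (p i + p j) - (3 / 8 : F) • (p (i + j) + p ((i : ℤ) - (j : ℤ)).natAbs))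
    (hbb : ∀ i j : ℤ, b i * b j = p (i - j).natAbs + (1 / 2 : F) • (b i + b j))
    (hbp : ∀ (i : ℤ) (j : ℕ), b i * p j =
      (3 / 2 : F) • p j - (3 / 4 : F) • b i + (3 / 8 : F) • (b (i - j) + b (i + j)))
    (hspan : Submodule.span F (Set.range p ∪ Set.range b) = ⊤)
    (θ : M →ₗ[F] M)
    (hθb : ∀ i : ℤ, θ (b i) = b (1 - i))
    (hθp : ∀ j : ℕ, θ (p j) = p j) :
    (∀ i : ℤ, b i * b i = b i) ∧ (∀ x y : M, θ (x * y) = θ x * θ y) ∧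
      Function.Bijective θ := by
  refine ⟨mul_self_eq_self_of_mul_eq hchar hp0 hbb, ?_, ?_⟩
  · refine θ.map_mul_of_span_eq_top hspan ?_
    rintro _ (⟨i, rfl⟩ | ⟨i, rfl⟩) _ (⟨j, rfl⟩ | ⟨j, rfl⟩)
    · exact reflection_map_mul_p_p hθp hpp i j
    · rw [mul_comm (p i), reflection_map_mul_b_p hθb hθp hbp, mul_comm]
    · exact reflection_map_mul_b_p hθb hθp hbp i j
    · exact reflection_map_mul_b_b hθb hθp hbb i j
  · refine (LinearMap.involutive_of_span_eq_top hspan ?_).bijective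
    rintro _ (⟨j, rfl⟩ | ⟨i, rfl⟩)
    · rw [hθp, hθp]
    · rw [hθb, hθb, sub_sub_cancel]
end

section
/- In the algebra Z(2,1/2) over a field F of characteristic not 2, the maps τ_0 and τ_1 determined by τ_0(â_i) = â_{−i}, τ_1(â_i) = â_{2−i}, τ_0(p̂_j) = τ_1(p̂_j) = p̂_j are algebra automorphisms, and for every i ∈ ℤ the element â_i satisfies: the operator of multiplication by â_i acts on p̂_j − (1/2)â_i + (1/4)(â_{i−j} + â_{i+j}) with eigenvalue 2, and on â_{i+j} − â_{i−j} with eigenvalue 1/2, for each j ∈ ℤ_{>0}. -/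
/-- in `Z(2,1/2)`, the maps `τ₀ : â_i ↦ â_{-i}` and
`τ₁ : â_i ↦ â_{2-i}` (fixing the `p̂_j`) are algebra automorphisms, and each
axis `â_i` has the displayed explicit `2`- and `1/2`-eigenvectors. -/
theorem stmt10 {F M : Type*} [Field F] [NonUnitalNonAssocCommRing M]
    [Module F M] [SMulCommClass F M M] [IsScalarTower F M M]
    (hchar : (2 : F) ≠ 0)
    (p : ℕ → M) (b : ℤ → M)
    (hp0 : p 0 = 0)
    (hpp : ∀ i j : ℕ, p i * p j =
      (3 / 4 : F) • (p i + p j) - (3 / 8 : F) • (p (i + j) + p ((i : ℤ) - (j : ℤ)).natAbs))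
    (hbb : ∀ i j : ℤ, b i * b j = p (i - j).natAbs + (1 / 2 : F) • (b i + b j))
    (hbp : ∀ (i : ℤ) (j : ℕ), b i * p j =
      (3 / 2 : F) • p j - (3 / 4 : F) • b i + (3 / 8 : F) • (b (i - j) + b (i + j)))
    (hspan : Submodule.span F (Set.range p ∪ Set.range b) = ⊤)
    (τ₀ τ₁ : M →ₗ[F] M)
    (hτ₀b : ∀ i : ℤ, τ₀ (b i) = b (-i)) (hτ₁b : ∀ i : ℤ, τ₁ (b i) = b (2 - i))
    (hτ₀p : ∀ j : ℕ, τ₀ (p j) = p j) (hτ₁p : ∀ j : ℕ, τ₁ (p j) = p j) :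
    ((∀ x y : M, τ₀ (x * y) = τ₀ x * τ₀ y) ∧ Function.Bijective τ₀) ∧
    ((∀ x y : M, τ₁ (x * y) = τ₁ x * τ₁ y) ∧ Function.Bijective τ₁) ∧
    (∀ (i : ℤ) (j : ℕ), 0 < j →
      b i * (p j - (1 / 2 : F) • b i + (1 / 4 : F) • (b (i - j) + b (i + j))) =
        (2 : F) • (p j - (1 / 2 : F) • b i + (1 / 4 : F) • (b (i - j) + b (i + j))) ∧
      b i * (b (i + j) - b (i - j)) = (1 / 2 : F) • (b (i + j) - b (i - j))) := by
  set S : Set M := Set.range p ∪ Set.range b with hS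
  -- multiplicativity for any linear map acting as b i ↦ b (c - i), p j ↦ p j
  have key : ∀ (τ : M →ₗ[F] M) (c : ℤ), (∀ i : ℤ, τ (b i) = b (c - i)) →
      (∀ j : ℕ, τ (p j) = p j) → ∀ x y : M, τ (x * y) = τ x * τ y := by
    intro τ c hτb hτp
    have genbp : ∀ (i : ℤ) (j : ℕ), τ (b i * p j) = τ (b i) * τ (p j) := by
      intro i j
      have e1 : c - (i - (j : ℤ)) = c - i + j := by ring
      have e2 : c - (i + (j : ℤ)) = c - i - j := by ring
      simp only [hbp, map_add, map_sub, map_smul, hτp, hτb, e1, e2]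
      rw [add_comm (b (c - i - (j : ℤ))) (b (c - i + (j : ℤ)))]
    have gen : ∀ x ∈ S, ∀ y ∈ S, τ (x * y) = τ x * τ y := by
      rintro x (⟨i, rfl⟩ | ⟨i, rfl⟩) y (⟨j, rfl⟩ | ⟨j, rfl⟩)
      · simp only [hpp, map_sub, map_smul, map_add, hτp]
      · rw [mul_comm, mul_comm (τ (p i))]; exact genbp j i
      · exact genbp i j
      · simp only [hbb, map_add, map_smul, hτb, hτp]
        rw [show (c - i - (c - j)).natAbs = (i - j).natAbs from by omega]
    have step1 : ∀ y ∈ S, ∀ x : M, τ (x * y) = τ x * τ y := by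
      intro y hy
      have h : τ.comp (LinearMap.mulRight F y) = (LinearMap.mulRight F (τ y)).comp τ :=
        LinearMap.ext_on hspan (fun x hx => by simpa using gen x hx y hy)
      intro x
      simpa using LinearMap.congr_fun h x
    intro x y
    have h : τ.comp (LinearMap.mulLeft F x) = (LinearMap.mulLeft F (τ x)).comp τ :=
      LinearMap.ext_on hspan (fun y hy => by simpa using step1 y hy x)
    simpa using LinearMap.congr_fun h y
  -- involutivity / bijectivity
  have inv0 : Function.Involutive τ₀ := by
    have h : τ₀.comp τ₀ = LinearMap.id :=
      LinearMap.ext_on hspan (by rintro x (⟨i, rfl⟩ | ⟨i, rfl⟩) <;> simp [hτ₀p, hτ₀b])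
    intro x
    simpa using LinearMap.congr_fun h x
  have inv1 : Function.Involutive τ₁ := by
    have h : τ₁.comp τ₁ = LinearMap.id :=
      LinearMap.ext_on hspan (by
        rintro x (⟨i, rfl⟩ | ⟨i, rfl⟩)
        · simp [hτ₁p]
        · simp only [LinearMap.comp_apply, hτ₁b, LinearMap.id_apply, sub_sub_cancel])
    intro x
    simpa using LinearMap.congr_fun h x
  refine ⟨⟨key τ₀ 0 (fun i => by rw [hτ₀b, zero_sub]) hτ₀p, inv0.bijective⟩,
    ⟨key τ₁ 2 hτ₁b hτ₁p, inv1.bijective⟩, ?_⟩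
  intro i j _
  have h2 : (1 / 2 : F) * 2 = 1 := one_div_mul_cancel hchar
  have e1 : b i * b i = b i := by
    rw [hbb, sub_self, Int.natAbs_zero, hp0, zero_add, ← two_smul F, smul_smul, h2, one_smul]
  have n2 : (i - (i - (j : ℤ))).natAbs = j := by omega
  have n3 : (i - (i + (j : ℤ))).natAbs = j := by omega
  have e2 : b i * b (i - j) = p j + (1 / 2 : F) • (b i + b (i - j)) := by rw [hbb, n2]
  have e3 : b i * b (i + j) = p j + (1 / 2 : F) • (b i + b (i + j)) := by rw [hbb, n3]
  constructor
  · rw [mul_add, mul_sub, mul_smul_comm, mul_smul_comm, mul_add, hbp, e1, e2, e3]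
    have h4 : (4 : F) ≠ 0 := by
      rw [show (4 : F) = 2 * 2 by norm_num]; exact mul_ne_zero hchar hchar
    have h8 : (8 : F) ≠ 0 := by
      rw [show (8 : F) = 2 * (2 * 2) by norm_num]
      exact mul_ne_zero hchar (mul_ne_zero hchar hchar)
    match_scalars <;> (field_simp; try ring)
  · rw [mul_sub, e2, e3]
    module
end

section
/- Let M be a 2-generated axial algebra of Majorana type (ξ,η) admitting a flip, over a field of characteristic not 2. Suppose the axial dimension D = 4 and M satisfies an even relation a_2 + a_{−2} + α(a_1 + a_{−1}) + β a_0 = 0 with α, β ∈ F. Then multiplying by a_0 yields 2p_{2,0} + 2α p_1 + (η(2α − β + 2) + β)a_0 = 0; consequently η(2α − β + 2) + β = 0 and p_{2,0} = −α p_1, where p_1 = a_0a_1 − η(a_0+a_1) and p_{2,0} = a_0a_2 − η(a_0+a_2). -/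
section Periodic

variable {X : Type*} {a : ℤ → X}

theorem Function.Periodic.range_subset_of_two (h : Function.Periodic a 2) :
    Set.range a ⊆ {a 0, a 1} := by
  rintro _ ⟨i, rfl⟩
  have hi : a (i % 2) = a i := by
    rw [Int.emod_def, mul_comm]; exact h.sub_int_mul_eq (i / 2)
  rcases Int.emod_two_eq i with h2 | h2 <;> rw [h2] at hi <;> simp [← hi]

theorem periodic_two_of_dihedral {θ τ : X → X} (hθ : ∀ i, θ (a i) = a (1 - i))
    (hτ : ∀ i, τ (a i) = a (-i)) (h : a 1 = a (-1)) : Function.Periodic a 2 := by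
  -- the set of `i` with `a (i + 2) = a i` is stable under `i ↦ -1 - i` (by `θ`) and
  -- `i ↦ -2 - i` (by `τ`), hence under their composites `i ↦ i ± 1`
  have hθS : ∀ i, a (i + 2) = a i → a (-1 - i + 2) = a (-1 - i) := fun i hi => by
    have := congrArg θ hi
    rwa [hθ, hθ, show 1 - (i + 2) = -1 - i by ring, show 1 - i = -1 - i + 2 by ring,
      eq_comm] at this
  have hτS : ∀ i, a (i + 2) = a i → a (-2 - i + 2) = a (-2 - i) := fun i hi => by
    have := congrArg τ hi
    rwa [hτ, hτ, show -(i + 2) = -2 - i by ring, show -i = -2 - i + 2 by ring,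
      eq_comm] at this
  intro i
  induction i using Int.induction_on with
  | zero => convert hθS (-1) (by convert h using 2; norm_num) using 2 <;> norm_num
  | succ i ih => convert hθS _ (hτS i ih) using 2 <;> ring
  | pred i ih => convert hτS _ (hθS (-i) ih) using 2 <;> ring

end Periodic

theorem rank_span_range_le_two {R M : Type*} [Ring R] [StrongRankCondition R] [AddCommGroup M]
    [Module R M] {a : ℤ → M} (h : Function.Periodic a 2) :
    Module.rank R (Submodule.span R (Set.range a)) ≤ 2 :=
  calc Module.rank R (Submodule.span R (Set.range a))
      ≤ Module.rank R (Submodule.span R {a 0, a 1}) :=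
        Submodule.rank_mono (Submodule.span_mono h.range_subset_of_two)
    _ ≤ Cardinal.mk ({a 0, a 1} : Set M) := rank_span_le _
    _ ≤ 2 := by
      refine Cardinal.mk_insert_le.trans ?_
      rw [Cardinal.mk_singleton]; norm_num

namespace Majorana

variable {F M : Type*} [Field F] [NonUnitalNonAssocCommRing M] [Module F M]

/-- The paper's `p_{i,j}` is `p η (a i) (a j)`. -/
def p (η : F) (x y : M) : M := x * y - η • (x + y)

theorem p_comm (η : F) (x y : M) : p η x y = p η y x := by
  rw [p, p, mul_comm, add_comm]

theorem map_p (η : F) (σ : M ≃ₗ[F] M) (hσ : ∀ x y : M, σ (x * y) = σ x * σ y) (x y : M) :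
    σ (p η x y) = p η (σ x) (σ y) := by
  rw [p, p, map_sub, map_smul, map_add, hσ]

theorem p_map_miyamoto [SMulCommClass F M M] [IsScalarTower F M M] {ξ η : F} {a : M}
    (ha : IsMajoranaAxis ξ η a) (τ : M ≃ₗ[F] M)
    (heven : ∀ x ∈ esp a (1 : F) ⊔ esp a (0 : F) ⊔ esp a ξ, τ x = x)
    (hodd : ∀ x ∈ esp a η, τ x = -x) (x : M) : p η a (τ x) = p η a x := by
  obtain ⟨u, hu, w, hw, rfl⟩ := Submodule.mem_sup.mp (ha.decomp ▸ Submodule.mem_top (x := x))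
  have haw : a * w = η • w := by
    simpa using Module.End.mem_eigenspace_iff.mp hw
  rw [map_add, heven u hu, hodd w hw, p, p, mul_add, mul_add, mul_neg, haw]
  module

theorem mul_even_relation_sub_smul [SMulCommClass F M M] {η : F} {a y y' z z' : M}
    (ha : a * a = a) (α β : F)
    (hy : p η a y' = p η a y) (hz : p η a z' = p η a z) :
    a * (y + y' + α • (z + z') + β • a) - η • (y + y' + α • (z + z') + β • a) =
      (2 : F) • p η a y + (2 * α) • p η a z + (η * (2 * α - β + 2) + β) • a := by
  simp only [p] at hy hz ⊢
  rw [mul_add, mul_add, mul_add, mul_smul_comm, mul_smul_comm, mul_add, ha]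
  linear_combination (norm := module) hy + α • hz

end Majorana

open Majorana

theorem stmt13_general {F M : Type*} [Field F] [NonUnitalNonAssocCommRing M]
    [Module F M] [SMulCommClass F M M] [IsScalarTower F M M]
    (hchar : (2 : F) ≠ 0) (ξ η : F)
    (a : ℤ → M) (haxes : ∀ i : ℤ, IsMajoranaAxis ξ η (a i))
    (θ τ₀ : M ≃ₗ[F] M)
    (hθm : ∀ x y : M, θ (x * y) = θ x * θ y)
    (hτm : ∀ x y : M, τ₀ (x * y) = τ₀ x * τ₀ y)
    (hθa : ∀ i : ℤ, θ (a i) = a (1 - i))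
    (hτa : ∀ i : ℤ, τ₀ (a i) = a (-i))
    (hτeven : ∀ x ∈ esp (a 0) (1 : F) ⊔ esp (a 0) (0 : F) ⊔ esp (a 0) ξ, τ₀ x = x)
    (hτodd : ∀ x ∈ esp (a 0) η, τ₀ x = -x)
    (hD : Module.rank F ↥(Submodule.span F (Set.range a)) = 4)
    (α β : F) (hrel : a 2 + a (-2) + α • (a 1 + a (-1)) + β • a 0 = 0) :
    (2 : F) • (a 0 * a 2 - η • (a 0 + a 2)) +
        (2 * α) • (a 0 * a 1 - η • (a 0 + a 1)) +
        (η * (2 * α - β + 2) + β) • a 0 = 0 ∧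
    η * (2 * α - β + 2) + β = 0 ∧
    a 0 * a 2 - η • (a 0 + a 2) = (-α) • (a 0 * a 1 - η • (a 0 + a 1)) := by
  have hp : ∀ i, p η (a 0) (a (-i)) = p η (a 0) (a i) := fun i => by
    rw [← hτa]; exact p_map_miyamoto (haxes 0) τ₀ hτeven hτodd (a i)
  have hmul := mul_even_relation_sub_smul (haxes 0).idem α β (hp 2) (hp 1)
  rw [hrel, mul_zero, smul_zero, sub_zero, eq_comm] at hmul
  set c := η * (2 * α - β + 2) + β
  have hp1θ : θ (p η (a 0) (a 1)) = p η (a 0) (a 1) := by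
    rw [map_p η θ hθm, hθa, hθa, p_comm]; norm_num
  have hp1τ : τ₀ (p η (a 0) (a 1)) = p η (a 0) (a 1) := by
    rw [map_p η τ₀ hτm, hτa, hτa, neg_zero, hp]
  have hp2θτ : τ₀ (θ (p η (a 0) (a 2))) = θ (p η (a 0) (a 2)) := by
    rw [map_p η θ hθm, map_p η τ₀ hτm, hθa, hθa, hτa, hτa, p_comm]; norm_num
  have hθrel := congrArg θ hmul
  rw [map_add, map_add, map_smul, map_smul, map_smul, hp1θ, hθa, map_zero, sub_zero] at hθrel
  have hτrel := congrArg τ₀ hθrel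
  rw [map_add, map_add, map_smul, map_smul, map_smul, hp1τ, hp2θτ, hτa, map_zero] at hτrel
  have hc : c = 0 := by
    by_contra hc
    have hper := periodic_two_of_dihedral hθa hτa <|
      smul_right_injective M hc (add_left_cancel (hθrel.trans hτrel.symm))
    have := hD ▸ rank_span_range_le_two (R := F) hper
    norm_num at this
  refine ⟨hmul, hc, ?_⟩
  rw [hc, zero_smul, add_zero, mul_smul, ← smul_add, smul_eq_zero_iff_right hchar,
    add_eq_zero_iff_eq_neg, ← neg_smul] at hmul
  exact hmul

/-- axial dimension 4 with an even relation
`a₂ + a₋₂ + α(a₁ + a₋₁) + β a₀ = 0`: multiplying by `a₀` gives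
`2p₂,₀ + 2α p₁ + (η(2α-β+2)+β) a₀ = 0`, whence `η(2α-β+2)+β = 0` and
`p₂,₀ = -α p₁`. -/
theorem stmt13 {F M : Type*} [Field F] [NonUnitalNonAssocCommRing M]
    [Module F M] [SMulCommClass F M M] [IsScalarTower F M M]
    (hchar : (2 : F) ≠ 0) (ξ η : F)
    (hξ0 : ξ ≠ 0) (hξ1 : ξ ≠ 1) (hη0 : η ≠ 0) (hη1 : η ≠ 1) (hξη : ξ ≠ η)
    (a : ℤ → M) (haxes : ∀ i : ℤ, IsMajoranaAxis ξ η (a i))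
    (hgen : NonUnitalAlgebra.adjoin F ({a 0, a 1} : Set M) = ⊤)
    (θ τ₀ : M ≃ₗ[F] M)
    (hθm : ∀ x y : M, θ (x * y) = θ x * θ y)
    (hτm : ∀ x y : M, τ₀ (x * y) = τ₀ x * τ₀ y)
    (hθa : ∀ i : ℤ, θ (a i) = a (1 - i))
    (hτa : ∀ i : ℤ, τ₀ (a i) = a (-i))
    (hτeven : ∀ x ∈ esp (a 0) (1 : F) ⊔ esp (a 0) (0 : F) ⊔ esp (a 0) ξ, τ₀ x = x)
    (hτodd : ∀ x ∈ esp (a 0) η, τ₀ x = -x)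
    (hD : Module.rank F ↥(Submodule.span F (Set.range a)) = 4)
    (α β : F) (hrel : a 2 + a (-2) + α • (a 1 + a (-1)) + β • a 0 = 0) :
    (2 : F) • (a 0 * a 2 - η • (a 0 + a 2)) +
        (2 * α) • (a 0 * a 1 - η • (a 0 + a 1)) +
        (η * (2 * α - β + 2) + β) • a 0 = 0 ∧
    η * (2 * α - β + 2) + β = 0 ∧
    a 0 * a 2 - η • (a 0 + a 2) = (-α) • (a 0 * a 1 - η • (a 0 + a 1)) :=
  stmt13_general hchar ξ η a haxes θ τ₀ hθm hτm hθa hτa hτeven hτodd hD α β hrel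
end

section
/- Let M be a 2-generated axial algebra of Majorana type (ξ,η) admitting a flip, over a field of characteristic not 2, with axes a_i and p_{i,j} = a_j a_{i+j} − η(a_i + a_{i+j}). Suppose the axial dimension D = 5, dim M = 5 (so M = Span{a_i}), and M satisfies an even relation a_3 + a_{−2} + α(a_2 + a_{−1}) + β(a_1 + a_0) = 0. Then p_1 = 0. -/
/-!
The polynomial `p = a₀a₁ - η(a₀ + a₁)` has no `η`-component with respect to `a₀`, so the flip
`τ₀` fixes it; it is visibly fixed by `θ`. The even relation expresses `a₃` through
`a₋₂, …, a₂`, and since `θ`, `τ₀` generate the dihedral action on the indices, all axes lie in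
their span. By the dimension count `a₋₂, …, a₂` is a basis of `M`, and in it the
`⟨θ, τ₀⟩`-invariant vectors are `0`: `θ` sends `a₋₂` to `a₃ = -a₋₂ + …`, which forces the
`a₋₂`-coordinate to vanish, and then `τ₀` and `θ` kill the remaining ones in turn.
-/

section Majorana

variable {F M : Type*} [Field F] [NonUnitalNonAssocCommRing M] [Module F M]
  [SMulCommClass F M M] [IsScalarTower F M M]

theorem mul_eq_smul_of_mem_esp {a x : M} {μ : F} (hx : x ∈ esp a μ) : a * x = μ • x := by
  simpa using Module.End.mem_eigenspace_iff.mp hx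

theorem IsMajoranaAxis.mem_esp_one {ξ η : F} {a : M} (ha : IsMajoranaAxis ξ η a) :
    a ∈ esp a (1 : F) :=
  ha.prim ▸ Submodule.mem_span_singleton_self a

/-- `ad a - η` kills the `η`-eigenspace and preserves the others. -/
theorem IsMajoranaAxis.mul_sub_smul_add_mem {ξ η : F} {a : M} (ha : IsMajoranaAxis ξ η a)
    (x : M) : a * x - η • (a + x) ∈ esp a (1 : F) ⊔ esp a (0 : F) ⊔ esp a ξ := by
  set E := esp a (1 : F) ⊔ esp a (0 : F) ⊔ esp a ξ
  set f : M →ₗ[F] M := LinearMap.mul F M a - η • LinearMap.id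
  have hf : ∀ y, f y = a * y - η • y := fun y => rfl
  have hpres : ∀ μ, esp a μ ≤ E → esp a μ ≤ E.comap f := fun μ hμ y hy => by
    rw [Submodule.mem_comap, hf, mul_eq_smul_of_mem_esp hy]
    exact hμ (sub_mem (Submodule.smul_mem _ _ hy) (Submodule.smul_mem _ _ hy))
  have hkill : esp a η ≤ E.comap f := fun y hy => by
    rw [Submodule.mem_comap, hf, mul_eq_smul_of_mem_esp hy, sub_self]
    exact E.zero_mem
  have hE : E ≤ E.comap f :=
    sup_le (sup_le (hpres 1 (le_sup_left.trans le_sup_left))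
      (hpres 0 (le_sup_right.trans le_sup_left))) (hpres ξ le_sup_right)
  have hfx : f x ∈ E := (ha.decomp ▸ sup_le hE hkill : ⊤ ≤ E.comap f) Submodule.mem_top
  rw [smul_add, ← sub_sub, sub_right_comm, ← hf]
  exact sub_mem hfx ((le_sup_left.trans le_sup_left : esp a (1 : F) ≤ E)
    (Submodule.smul_mem _ _ ha.mem_esp_one))

end Majorana

theorem Int.forall_of_neg_of_one_sub {P : ℤ → Prop} (h0 : P 0) (hneg : ∀ i, P i → P (-i))
    (hflip : ∀ i, P i → P (1 - i)) (i : ℤ) : P i := by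
  induction i using Int.induction_on with
  | zero => exact h0
  | succ n ih => simpa [add_comm] using hflip _ (hneg _ ih)
  | pred n ih => convert hneg _ (hflip _ ih) using 1; ring

section Window

variable {F M : Type*} [Field F] [AddCommGroup M] [Module F M]

def fiveAxes (a : ℤ → M) : Fin 5 → M := ![a (-2), a (-1), a 0, a 1, a 2]

theorem mem_span_fiveAxes {a : ℤ → M} {i : ℤ} (hi : -2 ≤ i ∧ i ≤ 2) :
    a i ∈ Submodule.span F (Set.range (fiveAxes a)) := by
  obtain ⟨k, rfl⟩ : ∃ k : Fin 5, i = k - 2 := ⟨⟨(i + 2).toNat, by omega⟩, by simp; omega⟩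
  refine Submodule.subset_span ⟨k, ?_⟩
  fin_cases k <;> rfl

theorem mem_span_fiveAxes_of_flip (a : ℤ → M) (θ τ : M →ₗ[F] M)
    (hθa : ∀ i, θ (a i) = a (1 - i)) (hτa : ∀ i, τ (a i) = a (-i))
    (h3 : a 3 ∈ Submodule.span F (Set.range (fiveAxes a))) (i : ℤ) :
    a i ∈ Submodule.span F (Set.range (fiveAxes a)) := by
  set S := Submodule.span F (Set.range (fiveAxes a))
  have hmem : ∀ i, -2 ≤ i ∧ i ≤ 3 → a i ∈ S := fun i hi => by
    rcases eq_or_ne i 3 with rfl | h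
    · exact h3
    · exact mem_span_fiveAxes (by omega)
  have hstable : ∀ f : M →ₗ[F] M, (∀ k, f (fiveAxes a k) ∈ S) → ∀ x ∈ S, f x ∈ S :=
    fun f hf x hx => (Submodule.map_span_le f _ S).mpr (by simpa using hf) ⟨x, hx, rfl⟩
  refine Int.forall_of_neg_of_one_sub (P := fun i => a i ∈ S)
    (mem_span_fiveAxes (by omega)) (fun i hi => ?_) (fun i hi => ?_) i
  · simpa [hτa] using hstable τ (fun k => by
      fin_cases k <;> simp [fiveAxes, hτa] <;> exact hmem _ (by omega)) _ hi
  · simpa [hθa] using hstable θ (fun k => by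
      fin_cases k <;> simp [fiveAxes, hθa] <;> exact hmem _ (by omega)) _ hi

theorem eq_zero_of_mem_span_fiveAxes_of_flip (h2 : (2 : F) ≠ 0) (a : ℤ → M) (α β : F)
    (hrel : a 3 + a (-2) + α • (a 2 + a (-1)) + β • (a 1 + a 0) = 0)
    (hli : LinearIndependent F (fiveAxes a)) (θ τ : M →ₗ[F] M)
    (hθa : ∀ i, θ (a i) = a (1 - i)) (hτa : ∀ i, τ (a i) = a (-i)) {x : M}
    (hx : x ∈ Submodule.span F (Set.range (fiveAxes a))) (hθx : θ x = x) (hτx : τ x = x) :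
    x = 0 := by
  obtain ⟨c, rfl⟩ := (Submodule.mem_span_range_iff_exists_fun F).mp hx
  have hcoord := Fintype.linearIndependent_iff.mp hli
  simp only [Fin.sum_univ_five, fiveAxes, Matrix.cons_val, map_add, map_smul, hθa, hτa]
    at hθx hτx ⊢
  norm_num at hθx hτx
  have hτc := hcoord ![c 0 - c 4, c 1 - c 3, 0, c 3 - c 1, c 4 - c 0] (by
    simp only [Fin.sum_univ_five, fiveAxes, Matrix.cons_val]
    linear_combination (norm := module) -hτx)
  have hθc := hcoord ![-2 * c 0, c 4 - α * c 0 - c 1, c 3 - β * c 0 - c 2,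
      c 2 - β * c 0 - c 3, c 1 - α * c 0 - c 4] (by
    simp only [Fin.sum_univ_five, fiveAxes, Matrix.cons_val]
    linear_combination (norm := module) hθx - c 0 • hrel)
  simp only [Fin.forall_fin_succ, Matrix.cons_val_zero, Matrix.cons_val_succ,
    IsEmpty.forall_iff, and_true] at hτc hθc
  obtain ⟨hτ0, hτ1, -⟩ := hτc
  obtain ⟨hθ0, hθ1, hθ2, -⟩ := hθc
  have hc0 : c 0 = 0 := by simpa [h2] using hθ0
  have hc4 : c 4 = 0 := by linear_combination hc0 - hτ0
  have hc1 : c 1 = 0 := by linear_combination hc4 - α * hc0 - hθ1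
  have hc3 : c 3 = 0 := by linear_combination hc1 - hτ1
  have hc2 : c 2 = 0 := by linear_combination hc3 - β * hc0 - hθ2
  simp [hc0, hc1, hc2, hc3, hc4]

end Window

theorem stmt14_general {F M : Type*} [Field F] [NonUnitalNonAssocCommRing M]
    [Module F M] [SMulCommClass F M M] [IsScalarTower F M M]
    (hchar : (2 : F) ≠ 0) (ξ η : F)
    (a : ℤ → M) (haxes : ∀ i : ℤ, IsMajoranaAxis ξ η (a i))
    (θ τ₀ : M ≃ₗ[F] M)
    (hθm : ∀ x y : M, θ (x * y) = θ x * θ y)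
    (hθa : ∀ i : ℤ, θ (a i) = a (1 - i))
    (hτa : ∀ i : ℤ, τ₀ (a i) = a (-i))
    (hτeven : ∀ x ∈ esp (a 0) (1 : F) ⊔ esp (a 0) (0 : F) ⊔ esp (a 0) ξ, τ₀ x = x)
    (hD : Module.rank F ↥(Submodule.span F (Set.range a)) = 5)
    (hdim : Module.rank F M = 5)
    (α β : F) (hrel : a 3 + a (-2) + α • (a 2 + a (-1)) + β • (a 1 + a 0) = 0) :
    a 0 * a 1 - η • (a 0 + a 1) = 0 := by
  set S := Submodule.span F (Set.range (fiveAxes a))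
  have h3 : a 3 ∈ S := by
    rw [show a 3 = -(a (-2) + α • (a 2 + a (-1)) + β • (a 1 + a 0)) by
      linear_combination (norm := module) hrel]
    exact neg_mem (add_mem (add_mem (mem_span_fiveAxes (by norm_num))
      (S.smul_mem _ (add_mem (mem_span_fiveAxes (by norm_num)) (mem_span_fiveAxes (by norm_num)))))
      (S.smul_mem _ (add_mem (mem_span_fiveAxes (by norm_num)) (mem_span_fiveAxes (by norm_num)))))
  have hall : ∀ i, a i ∈ S :=
    mem_span_fiveAxes_of_flip a θ.toLinearMap τ₀.toLinearMap hθa hτa h3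
  have : Module.Finite F M := Module.finite_of_rank_eq_nat hdim
  have hfinrank : Module.finrank F M = 5 := Module.finrank_eq_of_rank_eq hdim
  have hspan : ⊤ ≤ S := by
    rw [← Submodule.eq_top_of_finrank_eq (S := Submodule.span F (Set.range a))
      (by rw [Module.finrank_eq_of_rank_eq hD, hfinrank])]
    exact Submodule.span_le.mpr (Set.range_subset_iff.mpr hall)
  have hli : LinearIndependent F (fiveAxes a) :=
    linearIndependent_of_top_le_span_of_card_eq_finrank hspan (by simp [hfinrank])
  refine eq_zero_of_mem_span_fiveAxes_of_flip hchar a α β hrel hli θ.toLinearMap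
    τ₀.toLinearMap hθa hτa (hspan Submodule.mem_top) ?_
    (hτeven _ ((haxes 0).mul_sub_smul_add_mem (a 1)))
  simp only [LinearEquiv.coe_coe, map_sub, map_smul, map_add, hθm, hθa]
  norm_num [mul_comm, add_comm]

/-- axial dimension 5 with `dim M = 5` and an even relation
`a₃ + a₋₂ + α(a₂ + a₋₁) + β(a₁ + a₀) = 0` forces `p₁ = 0`. -/
theorem stmt14 {F M : Type*} [Field F] [NonUnitalNonAssocCommRing M]
    [Module F M] [SMulCommClass F M M] [IsScalarTower F M M]
    (hchar : (2 : F) ≠ 0) (ξ η : F)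
    (hξ0 : ξ ≠ 0) (hξ1 : ξ ≠ 1) (hη0 : η ≠ 0) (hη1 : η ≠ 1) (hξη : ξ ≠ η)
    (a : ℤ → M) (haxes : ∀ i : ℤ, IsMajoranaAxis ξ η (a i))
    (hgen : NonUnitalAlgebra.adjoin F ({a 0, a 1} : Set M) = ⊤)
    (θ τ₀ : M ≃ₗ[F] M)
    (hθm : ∀ x y : M, θ (x * y) = θ x * θ y)
    (hτm : ∀ x y : M, τ₀ (x * y) = τ₀ x * τ₀ y)
    (hθa : ∀ i : ℤ, θ (a i) = a (1 - i))
    (hτa : ∀ i : ℤ, τ₀ (a i) = a (-i))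
    (hτeven : ∀ x ∈ esp (a 0) (1 : F) ⊔ esp (a 0) (0 : F) ⊔ esp (a 0) ξ, τ₀ x = x)
    (hτodd : ∀ x ∈ esp (a 0) η, τ₀ x = -x)
    (hD : Module.rank F ↥(Submodule.span F (Set.range a)) = 5)
    (hdim : Module.rank F M = 5)
    (α β : F) (hrel : a 3 + a (-2) + α • (a 2 + a (-1)) + β • (a 1 + a 0) = 0) :
    a 0 * a 1 - η • (a 0 + a 1) = 0 :=
  stmt14_general hchar ξ η a haxes θ τ₀ hθm hθa hτa hτeven hD hdim α β hrel
end

section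
/- Let M be a 2-generated axial algebra of Majorana type (ξ,η) with axes a_0, a_1, let λ_1 = φ_0(a_1) where φ_0(x)a_0 is the projection of x onto M_1(a_0) = Fa_0, and set x_1 = p_1 − (λ_1 − η)a_0 + (η/2)(a_1 + a_{−1}), y_1 = a_1 − a_{−1}, z_1 = p_1 − ((1−ξ)λ_1 − η)a_0 − ((ξ−η)/2)(a_1 + a_{−1}), where p_1 = a_0a_1 − η(a_0 + a_1) and a_{−1} = τ_0(a_1). Then z_1 a_0 = 0, x_1 a_0 = ξ x_1, and y_1 a_0 = η y_1. -/
/-- the elements `x₁, y₁, z₁` built from `p₁`, `λ₁` and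
`a₋₁ = τ₀(a₁)` satisfy `z₁a₀ = 0`, `x₁a₀ = ξx₁`, `y₁a₀ = ηy₁`. -/
theorem stmt16 {F M : Type*} [Field F] [NonUnitalNonAssocCommRing M]
    [Module F M] [SMulCommClass F M M] [IsScalarTower F M M]
    (hchar : (2 : F) ≠ 0) (ξ η : F)
    (hξ0 : ξ ≠ 0) (hξ1 : ξ ≠ 1) (hη0 : η ≠ 0) (hη1 : η ≠ 1) (hξη : ξ ≠ η)
    (a₀ a₁ : M) (h₀ : IsMajoranaAxis ξ η a₀) (h₁ : IsMajoranaAxis ξ η a₁)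
    (τ₀ : M →ₗ[F] M)
    (hτeven : ∀ x ∈ esp a₀ (1 : F) ⊔ esp a₀ (0 : F) ⊔ esp a₀ ξ, τ₀ x = x)
    (hτodd : ∀ x ∈ esp a₀ η, τ₀ x = -x)
    (lam : F) (u₀ uξ uη : M)
    (hu₀ : u₀ ∈ esp a₀ (0 : F)) (huξ : uξ ∈ esp a₀ ξ) (huη : uη ∈ esp a₀ η)
    (hdec : a₁ = lam • a₀ + u₀ + uξ + uη) :
    ((a₀ * a₁ - η • (a₀ + a₁)) - ((1 - ξ) * lam - η) • a₀ -
        ((ξ - η) / 2) • (a₁ + τ₀ a₁)) * a₀ = 0 ∧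
    ((a₀ * a₁ - η • (a₀ + a₁)) - (lam - η) • a₀ +
        (η / 2) • (a₁ + τ₀ a₁)) * a₀ =
      ξ • ((a₀ * a₁ - η • (a₀ + a₁)) - (lam - η) • a₀ +
        (η / 2) • (a₁ + τ₀ a₁)) ∧
    (a₁ - τ₀ a₁) * a₀ = η • (a₁ - τ₀ a₁) := by
  have ha : a₀ * a₀ = a₀ := h₀.idem
  have hm0 : a₀ * u₀ = 0 := by
    have := Module.End.mem_eigenspace_iff.mp hu₀
    simpa using this
  have hmξ : a₀ * uξ = ξ • uξ := by
    have := Module.End.mem_eigenspace_iff.mp huξ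
    simpa using this
  have hmη : a₀ * uη = η • uη := by
    have := Module.End.mem_eigenspace_iff.mp huη
    simpa using this
  have hτ : τ₀ a₁ = lam • a₀ + u₀ + uξ - uη := by
    have hmem : lam • a₀ + u₀ + uξ ∈ esp a₀ (1 : F) ⊔ esp a₀ (0 : F) ⊔ esp a₀ ξ := by
      have h1 : a₀ ∈ esp a₀ (1 : F) := by
        rw [esp, Module.End.mem_eigenspace_iff]; simpa using ha
      exact Submodule.add_mem _ (Submodule.add_mem _
        (Submodule.mem_sup_left (Submodule.mem_sup_left (Submodule.smul_mem _ _ h1)))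
        (Submodule.mem_sup_left (Submodule.mem_sup_right hu₀)))
        (Submodule.mem_sup_right huξ)
    have h2 := hτeven _ hmem
    have h3 := hτodd uη huη
    rw [hdec, map_add, h2, h3]
    abel
  subst hdec
  rw [hτ]
  refine ⟨?_, ?_, ?_⟩ <;>
  · simp only [mul_add, add_mul, sub_mul, mul_sub, smul_mul_assoc, mul_smul_comm,
      ha, hm0, hmξ, hmη, mul_comm u₀ a₀, mul_comm uξ a₀, mul_comm uη a₀,
      smul_add, smul_sub, smul_smul, smul_zero, mul_zero, zero_mul]
    match_scalars <;> field_simp <;> ring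
end
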